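/- For all N ≥ 2, all k ∈ {1,…,N−1} and all p ∈ (1/2,1), the eigenfunction f_{N,k} = f^{(1)}_{N,k} is strictly increasing on Ω_{N,k} with quantitative minimal increment: for all ζ, ζ' ∈ Ω_{N,k} with ζ < ζ', one has f_{N,k}(ζ') − f_{N,k}(ζ) ≥ λ^{(k−N)/2}·sin(π/N). -/

import Mathlib

open Filter
open scoped Classical BigOperators Topology

namespace Wasep

/-- Particle configurations on a segment of length `N`
(site `x` of the paper, `x ∈ {1,…,N}`, is index `x-1 : Fin N`). -/
abbrev Conf (N : ℕ) := Fin N → Bool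

/-- Number of particles of a configuration. -/
def numParticles {N : ℕ} (ξ : Conf N) : ℕ :=
  (Finset.univ.filter fun x => ξ x = true).card

/-- The left site of the bond `y` (the paper's site `y`, for `y ∈ {1,…,N-1}`). -/
def siteA {N : ℕ} (y : Fin (N - 1)) : Fin N := ⟨y.1, by have := y.isLt; omega⟩

/-- The right site of the bond `y` (the paper's site `y+1`, for `y ∈ {1,…,N-1}`). -/
def siteB {N : ℕ} (y : Fin (N - 1)) : Fin N := ⟨y.1 + 1, by have := y.isLt; omega⟩

/-- Jump rate of the bond `y` in configuration `ξ`: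
`q·1_{ξ(y)<ξ(y+1)} + p·1_{ξ(y)>ξ(y+1)}` with `q = 1-p`. -/
noncomputable def rate {N : ℕ} (p : ℝ) (ξ : Conf N) (y : Fin (N - 1)) : ℝ :=
  (if ξ (siteA y) = false ∧ ξ (siteB y) = true then 1 - p else 0) +
    (if ξ (siteA y) = true ∧ ξ (siteB y) = false then p else 0)

/-- The configuration `ξ^y`, with the contents of sites `y` and `y+1` swapped. -/
def swapBond {N : ℕ} (ξ : Conf N) (y : Fin (N - 1)) : Conf N :=
  ξ ∘ Equiv.swap (siteA y) (siteB y)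

/-- The ASEP generator acting on functions:
`(L f)(ξ) = Σ_{y=1}^{N-1} (q·1_{ξ(y)<ξ(y+1)} + p·1_{ξ(y)>ξ(y+1)})(f(ξ^y) − f(ξ))`. -/
noncomputable def gen (N : ℕ) (p : ℝ) (f : Conf N → ℝ) (ξ : Conf N) : ℝ :=
  ∑ y : Fin (N - 1), rate p ξ y * (f (swapBond ξ y) - f ξ)

/-- The ASEP generator, as a matrix:  `(L f)(ξ) = Σ_{ξ'} genM(ξ,ξ') f(ξ')`. -/
noncomputable def genM (N : ℕ) (p : ℝ) : Matrix (Conf N) (Conf N) ℝ := fun ξ ξ' =>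
  ∑ y : Fin (N - 1),
    rate p ξ y * ((if ξ' = swapBond ξ y then (1 : ℝ) else 0) - (if ξ' = ξ then (1 : ℝ) else 0))

/-- The semigroup `P_t = exp (t L)`; `Pt N p t ξ ξ'` is the transition
probability from `ξ` to `ξ'` in time `t`. -/
noncomputable def Pt (N : ℕ) (p t : ℝ) (ξ ξ' : Conf N) : ℝ :=
  (NormedSpace.exp (t • LinearMap.toContinuousLinearMap (Matrix.toLin' (genM N p))))
    (fun η => if η = ξ' then (1 : ℝ) else 0) ξ

/-- `λ = p / q`. -/
noncomputable def lam (p : ℝ) : ℝ := p / (1 - p)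

/-- The bias `b = p - q`. -/
def bias (p : ℝ) : ℝ := p - (1 - p)

/-- The increasing list of (1-based) particle positions `ξ_1 < ξ_2 < … < ξ_k`. -/
def particlePos {N : ℕ} (ξ : Conf N) : List ℕ :=
  ((Finset.univ.filter fun x => ξ x = true).sort (· ≤ ·)).map fun x => (x : ℕ) + 1

/-- `A(ξ) = Σ_{i=1}^k (N − k + i − ξ_i)`. -/
def Astat (N k : ℕ) {M : ℕ} (ξ : Conf M) : ℤ :=
  ∑ i ∈ Finset.range k, ((N : ℤ) - k + (i + 1) - ((particlePos ξ).getD i 0 : ℤ))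

/-- The partition function `Z_{N,k} = Σ_{ξ ∈ Ω⁰_{N,k}} λ^{−A(ξ)}`. -/
noncomputable def Zpart (N k : ℕ) (p : ℝ) : ℝ :=
  ∑ ξ ∈ Finset.univ.filter (fun ξ : Conf N => numParticles ξ = k), lam p ^ (-Astat N k ξ)

/-- The invariant measure `π_{N,k}(ξ) = λ^{−A(ξ)}/Z_{N,k}`,
extended by `0` outside of the `k`-particle sector. -/
noncomputable def statMeas (N k : ℕ) (p : ℝ) (ξ : Conf N) : ℝ :=
  if numParticles ξ = k then lam p ^ (-Astat N k ξ) / Zpart N k p else 0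

/-- Total variation distance `‖μ − ν‖_TV = sup_A (μ(A) − ν(A))` on a finite space. -/
noncomputable def tvDist {S : Type*} [Fintype S] (μ ν : S → ℝ) : ℝ :=
  ⨆ A : Finset S, (∑ x ∈ A, μ x - ∑ x ∈ A, ν x)

/-- `d^{N,k}(t) = max_{ξ ∈ Ω⁰_{N,k}} ‖P_t(ξ,·) − π_{N,k}‖_TV`. -/
noncomputable def distEq (N k : ℕ) (p t : ℝ) : ℝ :=
  ⨆ ξ : {ξ : Conf N // numParticles ξ = k},
    tvDist (fun ξ' => Pt N p t ξ.1 ξ') (statMeas N k p)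

/-- `T^{N,k}_mix(ε) = inf {t ≥ 0 : d^{N,k}(t) ≤ ε}`. -/
noncomputable def Tmix (N k : ℕ) (p ε : ℝ) : ℝ :=
  sInf {t : ℝ | 0 ≤ t ∧ distEq N k p t ≤ ε}

/-- The height function `h(ξ)(x) = Σ_{y=1}^x (2ξ(y) − 1)`, for `x ∈ {0,…,N}`. -/
def height {N : ℕ} (ξ : Conf N) (x : ℕ) : ℤ :=
  ∑ y ∈ Finset.univ.filter (fun y : Fin N => (y : ℕ) < x), (if ξ y then (1 : ℤ) else -1)

/-- Pointwise order on height functions. -/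
def heightLE {N : ℕ} (ξ ξ' : Conf N) : Prop := ∀ x ≤ N, height ξ x ≤ height ξ' x

/-- `ϱ = (√p − √q)²`. -/
noncomputable def rho (p : ℝ) : ℝ := (Real.sqrt p - Real.sqrt (1 - p)) ^ 2

/-- The spectral gap `gap_N = (√p − √q)² + 4√(pq)·sin²(π/(2N))`. -/
noncomputable def gapN (N : ℕ) (p : ℝ) : ℝ :=
  rho p + 4 * Real.sqrt (p * (1 - p)) * Real.sin (Real.pi / (2 * N)) ^ 2

/-- `a` solves the boundary value problem `√(pq)·Δa(x) = ϱ·a(x)` on `{1,…,N−1}`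
with `a(0) = 1` and `a(N) = λ^{(2k−N)/2}`, defining `a_{N,k}`. -/
def IsBVP (N k : ℕ) (p : ℝ) (a : ℕ → ℝ) : Prop :=
  a 0 = 1 ∧ a N = lam p ^ ((2 * (k : ℝ) - N) / 2) ∧
    ∀ x : ℕ, 1 ≤ x → x ≤ N - 1 →
      Real.sqrt (p * (1 - p)) * (a (x + 1) + a (x - 1) - 2 * a x) = rho p * a x

/-- `f^{(j)}_{N,k}(ζ) = Σ_{x=1}^{N-1} sin(jπx/N)·(λ^{ζ(x)/2} − a_{N,k}(x))/(λ−1)`,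
viewed as a function of the particle configuration via the height function. -/
noncomputable def eigenF (N : ℕ) (p : ℝ) (a : ℕ → ℝ) (j : ℕ) (ξ : Conf N) : ℝ :=
  ∑ x ∈ Finset.Icc 1 (N - 1),
    Real.sin ((j : ℝ) * Real.pi * x / N) *
      ((lam p ^ ((height ξ x : ℝ) / 2) - a x) / (lam p - 1))

/-- `f^{(0)}_{N,k}(ζ) = Σ_{x=1}^{N-1} (λ^{ζ(x)/2} − a_{N,k}(x))/(λ−1)`. -/
noncomputable def fZero (N : ℕ) (p : ℝ) (a : ℕ → ℝ) (ξ : Conf N) : ℝ :=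
  ∑ x ∈ Finset.Icc 1 (N - 1), (lam p ^ ((height ξ x : ℝ) / 2) - a x) / (lam p - 1)

/-- The maximal configuration `ξ^max` (particles on sites `1,…,k`);
its height function is `∧`. -/
def confMax (N k : ℕ) : Conf N := fun x => decide ((x : ℕ) < k)

/-- The minimal configuration `ξ^min` (particles on sites `N−k+1,…,N`);
its height function is `∨`. -/
def confMin (N k : ℕ) : Conf N := fun x => decide (N - k ≤ (x : ℕ))

/-- `π_{N,k}(ξ(x) = 1)` for the (0-based) site `x : Fin N`. -/
noncomputable def occProb (N k : ℕ) (p : ℝ) (x : Fin N) : ℝ :=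
  ∑ ξ ∈ Finset.univ.filter (fun ξ : Conf N => ξ x = true), statMeas N k p ξ

/-- `ℓ_N(ξ) = min {x ∈ {1,…,N} : ξ(x) = 1}`, the position of the leftmost particle. -/
noncomputable def leftPos {N : ℕ} (ξ : Conf N) : ℕ :=
  sInf {x | ∃ y : Fin N, ξ y = true ∧ x = (y : ℕ) + 1}

/-- `r_N(ξ) = max {x ∈ {1,…,N} : ξ(x) = 0}`, the position of the rightmost empty site. -/
noncomputable def rightEmpty {N : ℕ} (ξ : Conf N) : ℕ :=
  sSup {x | ∃ y : Fin N, ξ y = false ∧ x = (y : ℕ) + 1}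

/-- `Q₁(ξ)`: maximal length of a run of consecutive empty sites. -/
noncomputable def runEmpty {N : ℕ} (ξ : Conf N) : ℕ :=
  sSup {n | 1 ≤ n ∧ ∃ i, i + n ≤ N ∧
    ∀ y : Fin N, i ≤ (y : ℕ) → (y : ℕ) < i + n → ξ y = false}

/-- `Q₂(ξ)`: maximal length of a run of consecutive occupied sites. -/
noncomputable def runFull {N : ℕ} (ξ : Conf N) : ℕ :=
  sSup {n | 1 ≤ n ∧ ∃ i, i + n ≤ N ∧
    ∀ y : Fin N, i ≤ (y : ℕ) → (y : ℕ) < i + n → ξ y = true}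

/-- `Q(ξ) = max(Q₁(ξ), Q₂(ξ))`. -/
noncomputable def Qmax {N : ℕ} (ξ : Conf N) : ℕ := max (runEmpty ξ) (runFull ξ)

/-- `L_N(ζ) = max{x : ζ(x) = −x}` for a height function `ζ`. -/
noncomputable def LNh {N : ℕ} (ξ : Conf N) : ℕ :=
  sSup {x | x ≤ N ∧ height ξ x = -(x : ℤ)}

/-- `R_N(ζ) = min{x : ζ(x) = x − 2(N−k)}` for a height function `ζ`. -/
noncomputable def RNh (k : ℕ) {N : ℕ} (ξ : Conf N) : ℕ :=
  sInf {x | x ≤ N ∧ height ξ x = (x : ℤ) - 2 * ((N : ℤ) - k)}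

/-- `D_N(ζ) = max(|L_N(ζ) − (N−k)|, |R_N(ζ) − (N−k)|)`. -/
noncomputable def DNh (k : ℕ) {N : ℕ} (ξ : Conf N) : ℤ :=
  max |(LNh ξ : ℤ) - ((N : ℤ) - k)| |(RNh k ξ : ℤ) - ((N : ℤ) - k)|

/-- `H_ζ(x) = λ^{(N−k)/2}·(λ^{ζ(x)/2} − a_{N,k}(x))/(λ−1)`. -/
noncomputable def Hfun (N k : ℕ) (p : ℝ) (a : ℕ → ℝ) (ξ : Conf N) (x : ℕ) : ℝ :=
  lam p ^ (((N : ℝ) - k) / 2) * ((lam p ^ ((height ξ x : ℝ) / 2) - a x) / (lam p - 1))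

/-- Variance of `f` under the (probability vector) `μ`. -/
noncomputable def varOf {S : Type*} [Fintype S] (μ f : S → ℝ) : ℝ :=
  (∑ x, μ x * f x ^ 2) - (∑ x, μ x * f x) ^ 2

/-- Total variation distance between the pushforwards of `μ` and `ν` by `g`. -/
noncomputable def tvPush {S : Type*} [Fintype S] (μ ν : S → ℝ) (g : S → ℕ) : ℝ :=
  ⨆ A : Set ℕ,
    ((∑ x ∈ Finset.univ.filter (fun x => g x ∈ A), μ x) -
      ∑ x ∈ Finset.univ.filter (fun x => g x ∈ A), ν x)

/-- The scaling limit `ℓ_α(t)` of the (rescaled) position of the leftmost particle. -/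
noncomputable def ellAlpha (α t : ℝ) : ℝ :=
  if t ≤ α then 0
  else if (Real.sqrt α + Real.sqrt (1 - α)) ^ 2 ≤ t then 1 - α
  else (Real.sqrt t - Real.sqrt α) ^ 2

/-- The scaling limit `r_α(t)` of the (rescaled) position of the rightmost empty site. -/
noncomputable def rAlpha (α t : ℝ) : ℝ :=
  if t ≤ 1 - α then 1
  else if (Real.sqrt α + Real.sqrt (1 - α)) ^ 2 ≤ t then 1 - α
  else 1 - (Real.sqrt t - Real.sqrt (1 - α)) ^ 2

end Wasep

/-!
If `ζ < ζ'`, the two height functions agree at `0` and `N` (same number of particles) and have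
the parity of `x`, so they differ by at least `2` at some interior site `x`. The boundary term
`a_{N,k}` cancels in `f(ζ') - f(ζ)`, every summand of the difference is nonnegative, and the one
at `x` is at least `sin(πx/N) λ^{ζ(x)/2}`. Since a height function with `k` particles never drops
below `k - N`, and `sin` is concave on `[0, π]`, this is at least `sin(π/N) λ^{(k-N)/2}`.
-/

namespace Wasep

open Finset Real

section Height

variable {N : ℕ} (ξ : Conf N)

lemma height_zero : height ξ 0 = 0 := by
  simp [height]

lemma height_eq_two_mul_card_sub {x : ℕ} (hx : x ≤ N) :
    height ξ x = 2 * (#{y : Fin N | (y : ℕ) < x ∧ ξ y} : ℤ) - x := by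
  have hterm : ∀ y : Fin N, (if ξ y then (1 : ℤ) else -1) = 2 * (if ξ y then 1 else 0) - 1 := by
    intro y; cases ξ y <;> rfl
  rw [height, sum_congr rfl fun y _ => hterm y, sum_sub_distrib, ← mul_sum, sum_boole,
    sum_const, Fin.card_filter_val_lt, min_eq_right hx, filter_filter]
  simp

lemma height_N {k : ℕ} (hk : numParticles ξ = k) : height ξ N = 2 * k - N := by
  rw [height_eq_two_mul_card_sub ξ le_rfl, ← hk, numParticles]
  simp

lemma height_succ (y : Fin N) :
    height ξ (y + 1) = height ξ y + if ξ y then 1 else -1 := by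
  have hins : (univ.filter fun z : Fin N => (z : ℕ) < y + 1) =
      insert y (univ.filter fun z : Fin N => (z : ℕ) < y) := by
    ext z
    simp only [mem_filter, mem_univ, true_and, mem_insert, Fin.ext_iff]
    omega
  rw [height, height, hins, sum_insert (by simp), add_comm]

lemma two_dvd_height_add {x : ℕ} (hx : x ≤ N) : (2 : ℤ) ∣ height ξ x + x := by
  rw [height_eq_two_mul_card_sub ξ hx]
  simp

lemma abs_height_sub_height_le {x y : ℕ} (hxy : x ≤ y) (hy : y ≤ N) :
    |height ξ y - height ξ x| ≤ y - x := by
  induction y, hxy using Nat.le_induction with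
  | base => simp
  | succ y hxy ih =>
    obtain ⟨ih₁, ih₂⟩ := abs_le.1 (ih (by omega))
    have hstep : height ξ (y + 1) = height ξ y + if ξ ⟨y, hy⟩ then 1 else -1 :=
      height_succ ξ ⟨y, hy⟩
    rw [abs_le]
    push_cast
    split_ifs at hstep <;> constructor <;> linarith

lemma sub_le_height {k x : ℕ} (hk : numParticles ξ = k) (hx : x ≤ N) :
    (k : ℤ) - N ≤ height ξ x := by
  have hleft := abs_height_sub_height_le ξ (Nat.zero_le x) hx
  have hright := abs_height_sub_height_le ξ hx le_rfl
  rw [height_zero] at hleft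
  rw [height_N ξ hk] at hright
  rw [abs_le] at hleft hright
  push_cast at hleft hright
  omega

variable {ξ} in
lemma heightLE_antisymm {ξ' : Conf N} (h : heightLE ξ ξ') (h' : heightLE ξ' ξ) : ξ = ξ' := by
  funext y
  have hy := le_antisymm (h y y.isLt.le) (h' y y.isLt.le)
  have hy1 := le_antisymm (h (y + 1) y.isLt) (h' (y + 1) y.isLt)
  rw [height_succ, height_succ, hy] at hy1
  revert hy1
  cases ξ y <;> cases ξ' y <;> simp

variable {ξ} in
lemma exists_height_add_two_le {ξ' : Conf N} (hk : numParticles ξ = numParticles ξ')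
    (hle : heightLE ξ ξ') (hne : ξ ≠ ξ') :
    ∃ x ∈ Icc 1 (N - 1), height ξ x + 2 ≤ height ξ' x := by
  obtain ⟨x, hxN, hlt⟩ : ∃ x ≤ N, height ξ x < height ξ' x := by
    by_contra! hge
    exact hne (heightLE_antisymm hle hge)
  have hx0 : x ≠ 0 := by rintro rfl; simp [height_zero] at hlt
  have hxN' : x ≠ N := by rintro rfl; simp [height_N ξ hk, height_N ξ' rfl] at hlt
  have hpar := two_dvd_height_add ξ hxN
  have hpar' := two_dvd_height_add ξ' hxN
  exact ⟨x, mem_Icc.2 ⟨by omega, by omega⟩, by omega⟩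

end Height

lemma one_lt_lam {p : ℝ} (hp : p ∈ Set.Ioo (1 / 2 : ℝ) 1) : 1 < lam p := by
  rw [lam, one_lt_div (by linarith [hp.2])]
  linarith [hp.1]

lemma rpow_le_rpow_sub_rpow_div_sub_one {b s t : ℝ} (hb : 1 < b) (hst : s + 1 ≤ t) :
    b ^ s ≤ (b ^ t - b ^ s) / (b - 1) := by
  have hbt := rpow_le_rpow_of_exponent_le hb.le hst
  rw [rpow_add (by linarith), rpow_one] at hbt
  rw [le_div_iff₀ (by linarith)]
  linarith

lemma sin_pi_mul_div_nonneg {N x : ℕ} (hx : x ≤ N) : 0 ≤ sin (π * x / N) := by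
  apply sin_nonneg_of_nonneg_of_le_pi (by positivity)
  apply div_le_of_le_mul₀ (by positivity) pi_pos.le
  gcongr

lemma sin_pi_div_le_sin_pi_mul_div {N x : ℕ} (hx : 1 ≤ x) (hxN : x ≤ N - 1) :
    sin (π / N) ≤ sin (π * x / N) := by
  have hN : (x : ℝ) + 1 ≤ N := by exact_mod_cast (by omega : x + 1 ≤ N)
  have hx' : (1 : ℝ) ≤ x := by exact_mod_cast hx
  have hN0 : (0 : ℝ) < N := by linarith
  have hθ : 0 < π / N := div_pos pi_pos hN0
  have hπ : π - π / N = (N - 1) * (π / N) := by field_simp [hN0.ne']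
  have hθπ : π / N ≤ π - π / N := by rw [hπ]; nlinarith
  have hmem : π * x / N ∈ segment ℝ (π / N) (π - π / N) := by
    rw [segment_eq_Icc hθπ, mul_div_right_comm, hπ]
    exact ⟨by nlinarith, by nlinarith⟩
  have hmin := strictConcaveOn_sin_Icc.concaveOn.ge_on_segment
    ⟨hθ.le, by linarith⟩ ⟨by linarith, by linarith⟩ hmem
  rwa [sin_pi_sub, min_self] at hmin

section Eigenfunction

variable {N : ℕ} {p : ℝ} (a : ℕ → ℝ) (j : ℕ) {ξ ξ' : Conf N}

lemma eigenF_sub_eigenF :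
    eigenF N p a j ξ' - eigenF N p a j ξ = ∑ x ∈ Icc 1 (N - 1), sin (j * π * x / N) *
      ((lam p ^ ((height ξ' x : ℝ) / 2) - lam p ^ ((height ξ x : ℝ) / 2)) / (lam p - 1)) := by
  rw [eigenF, eigenF, ← sum_sub_distrib]
  refine sum_congr rfl fun x _ => ?_
  ring

lemma sin_mul_le_eigenF_sub_eigenF (hlam : 1 ≤ lam p) (hle : heightLE ξ ξ') {x : ℕ}
    (hx : x ∈ Icc 1 (N - 1)) :
    sin (π * x / N) *
        ((lam p ^ ((height ξ' x : ℝ) / 2) - lam p ^ ((height ξ x : ℝ) / 2)) / (lam p - 1)) ≤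
      eigenF N p a 1 ξ' - eigenF N p a 1 ξ := by
  rw [eigenF_sub_eigenF]
  simp only [Nat.cast_one, one_mul]
  apply single_le_sum _ hx
  intro y hy
  have hyN : y ≤ N := (mem_Icc.1 hy).2.trans (Nat.sub_le N 1)
  have hhy : (height ξ y : ℝ) ≤ height ξ' y := by exact_mod_cast hle y hyN
  exact mul_nonneg (sin_pi_mul_div_nonneg hyN)
    (div_nonneg (sub_nonneg.2 (rpow_le_rpow_of_exponent_le hlam (by linarith))) (sub_nonneg.2 hlam))

end Eigenfunction

theorem eigenfunction_minimal_increment_general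
    (N k : ℕ) (p : ℝ)
    (hp : p ∈ Set.Ioo (1 / 2 : ℝ) 1)
    (a : ℕ → ℝ)
    (ξ ξ' : Conf N) (hξ : numParticles ξ = k) (hξ' : numParticles ξ' = k)
    (hle : heightLE ξ ξ') (hne : ξ ≠ ξ') :
    lam p ^ (((k : ℝ) - N) / 2) * Real.sin (Real.pi / N) ≤
      eigenF N p a 1 ξ' - eigenF N p a 1 ξ := by
  have hlam := one_lt_lam hp
  obtain ⟨x, hx, hjump⟩ := exists_height_add_two_le (hξ.trans hξ'.symm) hle hne
  obtain ⟨hx1, hxN⟩ := mem_Icc.1 hx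
  have hfloor : lam p ^ (((k : ℝ) - N) / 2) ≤ lam p ^ ((height ξ x : ℝ) / 2) := by
    have : (k : ℝ) - N ≤ height ξ x := by exact_mod_cast sub_le_height ξ hξ (by omega)
    exact rpow_le_rpow_of_exponent_le hlam.le (by linarith)
  have hgain : lam p ^ ((height ξ x : ℝ) / 2) ≤
      (lam p ^ ((height ξ' x : ℝ) / 2) - lam p ^ ((height ξ x : ℝ) / 2)) / (lam p - 1) := by
    have : (height ξ x : ℝ) + 2 ≤ height ξ' x := by exact_mod_cast hjump
    exact rpow_le_rpow_sub_rpow_div_sub_one hlam (by linarith)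
  calc lam p ^ (((k : ℝ) - N) / 2) * sin (π / N)
      ≤ (lam p ^ ((height ξ' x : ℝ) / 2) - lam p ^ ((height ξ x : ℝ) / 2)) / (lam p - 1) *
          sin (π * x / N) :=
        mul_le_mul_of_nonneg (hfloor.trans hgain) (sin_pi_div_le_sin_pi_mul_div hx1 hxN)
          (by positivity) (sin_pi_mul_div_nonneg (by omega))
    _ ≤ eigenF N p a 1 ξ' - eigenF N p a 1 ξ := by
        rw [mul_comm]
        exact sin_mul_le_eigenF_sub_eigenF a hlam.le hle hx

/-- The eigenfunction `f_{N,k} = f^{(1)}_{N,k}` is strictly increasing, with minimal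
increment at least `λ^{(k−N)/2}·sin(π/N)` over strictly ordered pairs. -/
theorem eigenfunction_minimal_increment
    (N k : ℕ) (p : ℝ) (hN : 2 ≤ N) (hk : 1 ≤ k ∧ k < N)
    (hp : p ∈ Set.Ioo (1 / 2 : ℝ) 1)
    (a : ℕ → ℝ) (ha : IsBVP N k p a)
    (ξ ξ' : Conf N) (hξ : numParticles ξ = k) (hξ' : numParticles ξ' = k)
    (hle : heightLE ξ ξ') (hne : ξ ≠ ξ') :
    lam p ^ (((k : ℝ) - N) / 2) * Real.sin (Real.pi / N) ≤
      eigenF N p a 1 ξ' - eigenF N p a 1 ξ :=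
  eigenfunction_minimal_increment_general N k p hp a ξ ξ' hξ hξ' hle hne

end Wasep
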